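/- Let ℏ > 0, let X and Y be real symmetric n×n matrices with Y positive definite, set M = X + iY, and let φ_M^ℏ(x) = (det Y / (πℏ)ⁿ)^{1/4} exp(i M x·x / 2ℏ) and φ₀^ℏ(x) = (πℏ)^{−n/4} exp(−|x|²/2ℏ). Let S^{−1} be the symplectic matrix acting by S^{−1}(x,p) = (Y^{1/2} x, −Y^{−1/2} X x + Y^{−1/2} p), i.e. S^{−1} = [[Y^{1/2}, 0],[−Y^{−1/2} X, Y^{−1/2}]]. Then for every countable subset Λ of ℝ^{2n} and all a, b > 0, the Gabor system G(φ_M^ℏ, Λ) is an ℏ-frame with bounds a, b if and only if G(φ₀^ℏ, S^{−1}Λ) is an ℏ-frame with bounds a, b. -/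

import Mathlib

open MeasureTheory Matrix Complex
open scoped RealInnerProductSpace ENNReal

noncomputable section

abbrev E (n : ℕ) : Type := EuclideanSpace ℝ (Fin n)

def toE (n : ℕ) (v : Fin n → ℝ) : E n := WithLp.toLp 2 v
def fromE (n : ℕ) (v : E n) : Fin n → ℝ := WithLp.ofLp v

/-- The Heisenberg–Weyl operator `T^ℏ(z₀)`:
`T^ℏ(z₀)ψ(x) = exp(i(p₀·x − p₀·x₀/2)/ℏ) ψ(x − x₀)`. -/
def HW (n : ℕ) (hb : ℝ) (z₀ : E n × E n) (ψ : E n → ℂ) : E n → ℂ :=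
  fun x => Complex.exp (Complex.I * (((⟪z₀.2, x⟫ - ⟪z₀.2, z₀.1⟫ / 2) / hb : ℝ) : ℂ)) *
    ψ (x - z₀.1)

/-- The frame sum `∑_{z ∈ Λ} |⟨ψ, T^ℏ(z)φ⟩|²`, valued in `ℝ≥0∞`. -/
def gaborSum (n : ℕ) (hb : ℝ) (φ : E n → ℂ) (Λ : Set (E n × E n)) (ψ : E n → ℂ) : ℝ≥0∞ :=
  ∑' z : Λ, ENNReal.ofReal (‖∫ x, ψ x * (starRingEnd ℂ) (HW n hb (z : E n × E n) φ x)‖ ^ 2)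

/-- The Gabor system `G(φ,Λ)` is an `ℏ`-frame with bounds `a`, `b`:
`a‖ψ‖² ≤ ∑_{z∈Λ} |⟨ψ, T^ℏ(z)φ⟩|² ≤ b‖ψ‖²` for every `ψ ∈ L²(ℝⁿ)`. -/
def IsGaborFrame (n : ℕ) (hb : ℝ) (φ : E n → ℂ) (Λ : Set (E n × E n)) (a b : ℝ) : Prop :=
  ∀ ψ : E n → ℂ, MemLp ψ 2 volume →
    (ENNReal.ofReal (a * ∫ x, ‖ψ x‖ ^ 2) ≤ gaborSum n hb φ Λ ψ ∧
      gaborSum n hb φ Λ ψ ≤ ENNReal.ofReal (b * ∫ x, ‖ψ x‖ ^ 2))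

/-- The standard centered Gaussian `φ₀^ℏ(x) = (πℏ)^{−n/4} exp(−|x|²/2ℏ)`. -/
def gauss0 (n : ℕ) (hb : ℝ) : E n → ℂ :=
  fun x => ((((Real.pi * hb) ^ (-(n : ℝ) / 4) * Real.exp (-‖x‖ ^ 2 / (2 * hb))) : ℝ) : ℂ)

/-- The generalized Gaussian `φ_M^ℏ(x) = (det Y / (πℏ)ⁿ)^{1/4} exp(i M x·x / 2ℏ)`
with `M = X + iY`. -/
def gaussM (n : ℕ) (hb : ℝ) (X Y : Matrix (Fin n) (Fin n) ℝ) : E n → ℂ :=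
  fun x => (((Y.det / (Real.pi * hb) ^ n) ^ ((1 : ℝ) / 4) : ℝ) : ℂ) *
    Complex.exp (Complex.I *
      (((X.map ((↑) : ℝ → ℂ) + Complex.I • Y.map ((↑) : ℝ → ℂ)) *ᵥ
          (fun i => (x i : ℂ))) ⬝ᵥ (fun i => (x i : ℂ))) / (2 * (hb : ℂ)))

/-- The symplectic matrix `S⁻¹ = [[Y^{1/2}, 0],[−Y^{−1/2}X, Y^{−1/2}]]`, acting by
`S⁻¹(x,p) = (Y^{1/2}x, −Y^{−1/2}Xx + Y^{−1/2}p)`, where `R = Y^{1/2}`. -/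
def SinvXY (n : ℕ) (X R : Matrix (Fin n) (Fin n) ℝ) (z : E n × E n) : E n × E n :=
  (toE n (R *ᵥ fromE n z.1),
    toE n (-(R⁻¹ *ᵥ (X *ᵥ fromE n z.1)) + R⁻¹ *ᵥ fromE n z.2))

/-!
The operator `W f(y) = (det R)^{1/2} e^{i Xy·y/2ℏ} f(Ry)` is a unitary bijection of `L²(ℝⁿ)`
(its inverse is an operator of the same shape, with `R⁻¹` and `-R⁻ᵀXR⁻¹`) which maps `φ₀^ℏ` to
`φ_M^ℏ` and intertwines the Heisenberg–Weyl operators: `T^ℏ(z) W = W T^ℏ(S⁻¹z)`, the symplectic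
matrix `S⁻¹` being exactly what makes the quadratic phases match. Hence
`⟨W f, T^ℏ(z) φ_M^ℏ⟩ = ⟨f, T^ℏ(S⁻¹z) φ₀^ℏ⟩`, and since `S⁻¹` is injective the two frame sums
agree after substituting `W f` for `ψ`.
-/

open scoped ComplexConjugate

section LinearChangeOfVariables

variable {F G : Type*} [NormedAddCommGroup F] [NormedSpace ℝ F] [MeasurableSpace F]
  [BorelSpace F] [FiniteDimensional ℝ F] [NormedAddCommGroup G]
  (μ : Measure F) [μ.IsAddHaarMeasure] {L : F →ₗ[ℝ] F}

theorem LinearMap.measurableEmbedding_of_det_ne_zero (hL : LinearMap.det L ≠ 0) :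
    MeasurableEmbedding L := by
  have hunit : IsUnit L := (LinearMap.isUnit_iff_isUnit_det L).2 (isUnit_iff_ne_zero.2 hL)
  exact (L.isClosedEmbedding_of_injective
    (LinearMap.ker_eq_bot.2 ((Module.End.isUnit_iff L).1 hunit).1)).measurableEmbedding

theorem integral_comp_linearMap_of_det_ne_zero [NormedSpace ℝ G] (hL : LinearMap.det L ≠ 0)
    (g : F → G) : ∫ x, g (L x) ∂μ = |LinearMap.det L|⁻¹ • ∫ x, g x ∂μ := by
  rw [← (LinearMap.measurableEmbedding_of_det_ne_zero hL).integral_map,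
    Measure.map_linearMap_addHaar_eq_smul_addHaar μ hL, integral_smul_measure,
    ENNReal.toReal_ofReal (abs_nonneg _), abs_inv]

theorem MeasureTheory.MemLp.comp_linearMap_of_det_ne_zero {p : ℝ≥0∞} {f : F → G}
    (hL : LinearMap.det L ≠ 0) (hf : MemLp f p μ) : MemLp (fun x => f (L x)) p μ := by
  have hmap : MemLp f p (Measure.map L μ) := by
    rw [Measure.map_linearMap_addHaar_eq_smul_addHaar μ hL]
    exact hf.smul_measure ENNReal.ofReal_ne_top
  exact (memLp_map_measure_iff hmap.1 L.continuous_of_finiteDimensional.aemeasurable).1 hmap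

end LinearChangeOfVariables

theorem Matrix.mulVec_mulVec_dotProduct_mulVec {ι R : Type*} [Fintype ι] [CommSemiring R]
    (X A : Matrix ι ι R) (y : ι → R) :
    X *ᵥ (A *ᵥ y) ⬝ᵥ A *ᵥ y = (Aᵀ * X * A) *ᵥ y ⬝ᵥ y := by
  rw [Matrix.mul_assoc, ← mulVec_mulVec, mulVec_transpose, ← dotProduct_mulVec, mulVec_mulVec]

section Metaplectic

variable {n : ℕ}

def chirp (hb : ℝ) (X : Matrix (Fin n) (Fin n) ℝ) (y : E n) : ℂ :=
  exp (I * ((X *ᵥ fromE n y ⬝ᵥ fromE n y / (2 * hb) : ℝ) : ℂ))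

def metaplecticOp (hb : ℝ) (X R : Matrix (Fin n) (Fin n) ℝ) (f : E n → ℂ) (y : E n) : ℂ :=
  √R.det * chirp hb X y * f (toEuclideanLin R y)

variable {hb : ℝ} {X R : Matrix (Fin n) (Fin n) ℝ}

theorem chirp_add (X' : Matrix (Fin n) (Fin n) ℝ) (y : E n) :
    chirp hb (X + X') y = chirp hb X y * chirp hb X' y := by
  simp only [chirp, add_mulVec, add_dotProduct, add_div, ofReal_add, mul_add, exp_add]

theorem chirp_mul_chirp_neg (y : E n) : chirp hb X y * chirp hb (-X) y = 1 := by
  rw [← chirp_add, add_neg_cancel]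
  simp [chirp]

theorem chirp_toEuclideanLin (A : Matrix (Fin n) (Fin n) ℝ) (y : E n) :
    chirp hb X (toEuclideanLin A y) = chirp hb (Aᵀ * X * A) y := by
  simp only [chirp, fromE, toLpLin_apply, mulVec_mulVec_dotProduct_mulVec]

@[simp]
theorem norm_chirp (y : E n) : ‖chirp hb X y‖ = 1 :=
  norm_exp_I_mul_ofReal _

theorem continuous_chirp : Continuous (chirp (n := n) hb X) := by
  unfold chirp fromE
  fun_prop

theorem norm_metaplecticOp (f : E n → ℂ) (y : E n) :
    ‖metaplecticOp hb X R f y‖ = √R.det * ‖f (toEuclideanLin R y)‖ := by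
  simp [metaplecticOp, Real.sqrt_nonneg]

theorem metaplecticOp_mul_conj (hR : 0 ≤ R.det) (f g : E n → ℂ) (y : E n) :
    metaplecticOp hb X R f y * conj (metaplecticOp hb X R g y)
      = R.det * (f (toEuclideanLin R y) * conj (g (toEuclideanLin R y))) := by
  have hsq : (√R.det * chirp hb X y) * conj (√R.det * chirp hb X y) = R.det := by
    rw [mul_conj', norm_mul, norm_chirp, Complex.norm_real, Real.norm_of_nonneg
      (Real.sqrt_nonneg _), mul_one, ← ofReal_pow, Real.sq_sqrt hR]
  simp only [metaplecticOp, map_mul] at hsq ⊢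
  linear_combination (f (toEuclideanLin R y) * conj (g (toEuclideanLin R y))) * hsq

theorem integral_metaplecticOp_mul_conj (hR : 0 < R.det) (f g : E n → ℂ) :
    ∫ y, metaplecticOp hb X R f y * conj (metaplecticOp hb X R g y)
      = ∫ x, f x * conj (g x) := by
  simp_rw [metaplecticOp_mul_conj hR.le, integral_const_mul]
  rw [integral_comp_linearMap_of_det_ne_zero volume (by simpa using hR.ne')
      (fun x => f x * conj (g x)), LinearMap.det_toLpLin, abs_of_pos hR, Complex.real_smul,
    ← mul_assoc, ← ofReal_mul, mul_inv_cancel₀ hR.ne', ofReal_one, one_mul]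

theorem integral_norm_sq_metaplecticOp (hR : 0 < R.det) (f : E n → ℂ) :
    ∫ y, ‖metaplecticOp hb X R f y‖ ^ 2 = ∫ x, ‖f x‖ ^ 2 := by
  simp_rw [norm_metaplecticOp, mul_pow, Real.sq_sqrt hR.le, integral_const_mul]
  rw [integral_comp_linearMap_of_det_ne_zero volume (by simpa using hR.ne') (fun x => ‖f x‖ ^ 2),
    LinearMap.det_toLpLin, abs_of_pos hR, smul_eq_mul, ← mul_assoc, mul_inv_cancel₀ hR.ne', one_mul]

theorem MeasureTheory.MemLp.metaplecticOp (hR : 0 < R.det) {f : E n → ℂ} (hf : MemLp f 2) :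
    MemLp (metaplecticOp hb X R f) 2 := by
  have hfL := hf.comp_linearMap_of_det_ne_zero volume (L := toEuclideanLin R)
    (by simpa using hR.ne')
  have hmul : Continuous fun y => (√R.det : ℂ) * chirp hb X y := by
    have := continuous_chirp (n := n) (hb := hb) (X := X)
    fun_prop
  refine hfL.of_le_mul (c := √R.det) (hmul.aestronglyMeasurable.mul hfL.1) ?_
  exact .of_forall fun y => (norm_metaplecticOp f y).le

theorem metaplecticOp_metaplecticOp_inv (hR : 0 < R.det) (f : E n → ℂ) :
    metaplecticOp hb X R (metaplecticOp hb (-(R⁻¹ᵀ * X * R⁻¹)) R⁻¹ f) = f := by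
  have hdet : IsUnit R.det := isUnit_iff_ne_zero.2 hR.ne'
  have hRinvR : toEuclideanLin R⁻¹ ∘ₗ toEuclideanLin R = LinearMap.id := by
    rw [← toLpLin_mul_same, nonsing_inv_mul R hdet, toLpLin_one]
  have hphase : Rᵀ * -(R⁻¹ᵀ * X * R⁻¹) * R = -X := by
    rw [Matrix.mul_neg, Matrix.neg_mul, ← Matrix.mul_assoc, ← Matrix.mul_assoc, ← transpose_mul,
      nonsing_inv_mul R hdet, transpose_one, Matrix.one_mul, Matrix.mul_assoc,
      nonsing_inv_mul R hdet, Matrix.mul_one]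
  have hsqrt : (√R.det : ℂ) * √(R⁻¹).det = 1 := by
    rw [← ofReal_mul, ← ofReal_one, ofReal_inj, det_nonsing_inv, Ring.inverse_eq_inv',
      Real.sqrt_inv, mul_inv_cancel₀ (by positivity)]
  funext y
  simp only [metaplecticOp, chirp_toEuclideanLin, hphase, ← LinearMap.comp_apply, hRinvR,
    LinearMap.id_apply]
  linear_combination f y * chirp hb X y * chirp hb (-X) y * hsqrt + f y * chirp_mul_chirp_neg y

end Metaplectic

section Gaussians

variable {n : ℕ} {hb : ℝ} {X Y R : Matrix (Fin n) (Fin n) ℝ}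

theorem norm_sq_eq_dotProduct (x : E n) : ‖x‖ ^ 2 = fromE n x ⬝ᵥ fromE n x := by
  rw [← real_inner_self_eq_norm_sq]
  rfl

theorem Matrix.map_ofReal_mulVec_dotProduct {ι : Type*} [Fintype ι] (A : Matrix ι ι ℝ)
    (v : ι → ℝ) :
    A.map ((↑) : ℝ → ℂ) *ᵥ (fun i => (v i : ℂ)) ⬝ᵥ (fun i => (v i : ℂ))
      = ((A *ᵥ v ⬝ᵥ v : ℝ) : ℂ) := by
  simp [mulVec, dotProduct, Finset.sum_mul]

theorem gaussM_normalization_eq (hhb : 0 < hb) (hR : 0 < R.det) (hRR : R * R = Y) :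
    (Y.det / (Real.pi * hb) ^ n) ^ ((1 : ℝ) / 4) = √R.det * (Real.pi * hb) ^ (-(n : ℝ) / 4) := by
  have hpi : 0 < Real.pi * hb := by positivity
  rw [← hRR, det_mul, Real.div_rpow (by positivity) (by positivity), ← Real.rpow_natCast,
    ← Real.rpow_mul hpi.le, Real.sqrt_eq_rpow, div_eq_mul_inv, ← Real.rpow_neg hpi.le,
    Real.mul_rpow hR.le hR.le, ← Real.rpow_add hR]
  congr 2 <;> ring

theorem gaussM_eq_metaplecticOp_gauss0 (hhb : 0 < hb) (hRsym : Rᵀ = R) (hR : 0 < R.det)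
    (hRR : R * R = Y) : gaussM n hb X Y = metaplecticOp hb X R (gauss0 n hb) := by
  funext x
  have hnorm : ‖toEuclideanLin R x‖ ^ 2 = Y *ᵥ fromE n x ⬝ᵥ fromE n x := by
    rw [norm_sq_eq_dotProduct]
    simp only [fromE, toLpLin_apply]
    rw [dotProduct_mulVec, ← mulVec_transpose, hRsym, mulVec_mulVec, hRR]
  have hexp : I * ((X.map ((↑) : ℝ → ℂ) + I • Y.map ((↑) : ℝ → ℂ)) *ᵥ (fun i => (x i : ℂ)) ⬝ᵥ
      (fun i => (x i : ℂ))) / (2 * (hb : ℂ))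
        = I * ((X *ᵥ fromE n x ⬝ᵥ fromE n x / (2 * hb) : ℝ) : ℂ)
          + ((-‖toEuclideanLin R x‖ ^ 2 / (2 * hb) : ℝ) : ℂ) := by
    rw [add_mulVec, smul_mulVec, add_dotProduct, smul_dotProduct, map_ofReal_mulVec_dotProduct,
      map_ofReal_mulVec_dotProduct, hnorm]
    simp only [fromE]
    push_cast
    linear_combination ((Y *ᵥ x.ofLp ⬝ᵥ x.ofLp : ℝ) : ℂ) / (2 * hb) * I_sq
  simp only [gaussM, metaplecticOp, chirp, gauss0, hexp, exp_add,
    gaussM_normalization_eq hhb hR hRR]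
  push_cast
  ring

end Gaussians

theorem Matrix.inv_mulVec_dotProduct_mulVec {ι K : Type*} [Fintype ι] [DecidableEq ι]
    [CommRing K] {R : Matrix ι ι K} (hRsym : Rᵀ = R) (hR : IsUnit R.det) (u v : ι → K) :
    R⁻¹ *ᵥ u ⬝ᵥ R *ᵥ v = u ⬝ᵥ v := by
  rw [dotProduct_mulVec, ← mulVec_transpose, hRsym, mulVec_mulVec, mul_nonsing_inv R hR,
    one_mulVec]

section Covariance

variable {n : ℕ} {hb : ℝ} {X R : Matrix (Fin n) (Fin n) ℝ}

theorem symplectic_phase_eq (hX : Xᵀ = X) (hRsym : Rᵀ = R) (hR : IsUnit R.det)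
    (x₀ p y : Fin n → ℝ) :
    y ⬝ᵥ p - x₀ ⬝ᵥ p / 2 + X *ᵥ (y - x₀) ⬝ᵥ (y - x₀) / 2
      = X *ᵥ y ⬝ᵥ y / 2 + (R *ᵥ y ⬝ᵥ (-(R⁻¹ *ᵥ (X *ᵥ x₀)) + R⁻¹ *ᵥ p)
          - R *ᵥ x₀ ⬝ᵥ (-(R⁻¹ *ᵥ (X *ᵥ x₀)) + R⁻¹ *ᵥ p) / 2) := by
  have hXsym : X *ᵥ x₀ ⬝ᵥ y = X *ᵥ y ⬝ᵥ x₀ := by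
    rw [dotProduct_comm, dotProduct_mulVec, ← mulVec_transpose, hX]
  rw [dotProduct_comm (R *ᵥ y), dotProduct_comm (R *ᵥ x₀)]
  simp only [add_dotProduct, neg_dotProduct, inv_mulVec_dotProduct_mulVec hRsym hR, mulVec_sub,
    sub_dotProduct, dotProduct_sub, hXsym, dotProduct_comm p]
  ring

theorem exp_phase_mul_chirp_sub (hX : Xᵀ = X) (hRsym : Rᵀ = R) (hR : IsUnit R.det)
    (z : E n × E n) (y : E n) :
    exp (I * (((⟪z.2, y⟫ - ⟪z.2, z.1⟫ / 2) / hb : ℝ) : ℂ)) * chirp hb X (y - z.1)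
      = chirp hb X y * exp (I * (((⟪(SinvXY n X R z).2, toEuclideanLin R y⟫
          - ⟪(SinvXY n X R z).2, (SinvXY n X R z).1⟫ / 2) / hb : ℝ) : ℂ)) := by
  have hphase := symplectic_phase_eq hX hRsym hR (fromE n z.1) (fromE n z.2) (fromE n y)
  simp only [chirp, ← exp_add, ← mul_add, ← ofReal_add]
  congr 3
  simp only [EuclideanSpace.inner_eq_star_dotProduct, star_trivial, SinvXY, toE, fromE,
    toLpLin_apply, WithLp.ofLp_sub] at hphase ⊢
  linear_combination hphase / hb

theorem HW_metaplecticOp (hX : Xᵀ = X) (hRsym : Rᵀ = R) (hR : IsUnit R.det) (z : E n × E n)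
    (f : E n → ℂ) :
    HW n hb z (metaplecticOp hb X R f) = metaplecticOp hb X R (HW n hb (SinvXY n X R z) f) := by
  funext y
  have hshift : toEuclideanLin R (y - z.1) = toEuclideanLin R y - (SinvXY n X R z).1 := map_sub ..
  simp only [HW, metaplecticOp, hshift]
  linear_combination √R.det * f (toEuclideanLin R y - (SinvXY n X R z).1) *
    exp_phase_mul_chirp_sub (hb := hb) hX hRsym hR z y

end Covariance

section Frames

variable {n : ℕ} {hb : ℝ} {X Y R : Matrix (Fin n) (Fin n) ℝ}

theorem SinvXY_injective (hR : IsUnit R.det) : Function.Injective (SinvXY n X R) := by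
  have hRinj : Function.Injective R.mulVec :=
    mulVec_injective_iff_isUnit.2 ((isUnit_iff_isUnit_det R).2 hR)
  have hRinvinj : Function.Injective R⁻¹.mulVec :=
    mulVec_injective_iff_isUnit.2 ((isUnit_iff_isUnit_det R⁻¹).2 (isUnit_nonsing_inv_det R hR))
  rintro ⟨x, p⟩ ⟨x', p'⟩ h
  simp only [SinvXY, toE, fromE, Prod.mk.injEq, WithLp.toLp_injective 2 |>.eq_iff] at h
  obtain ⟨hx, hp⟩ := h
  obtain rfl : x = x' := WithLp.ofLp_injective 2 (hRinj hx)
  obtain rfl : p = p' := WithLp.ofLp_injective 2 (hRinvinj (add_left_cancel hp))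
  rfl

theorem gaborSum_gaussM_metaplecticOp (hhb : 0 < hb) (hX : Xᵀ = X) (hRsym : Rᵀ = R)
    (hR : 0 < R.det) (hRR : R * R = Y) (Λ : Set (E n × E n)) (f : E n → ℂ) :
    gaborSum n hb (gaussM n hb X Y) Λ (metaplecticOp hb X R f)
      = gaborSum n hb (gauss0 n hb) (SinvXY n X R '' Λ) f := by
  have hdet : IsUnit R.det := isUnit_iff_ne_zero.2 hR.ne'
  rw [gaborSum, gaborSum, tsum_image (fun w => ENNReal.ofReal
      (‖∫ x, f x * conj (HW n hb w (gauss0 n hb) x)‖ ^ 2)) (SinvXY_injective hdet).injOn,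
    gaussM_eq_metaplecticOp_gauss0 hhb hRsym hR hRR]
  simp_rw [HW_metaplecticOp hX hRsym hdet, integral_metaplecticOp_mul_conj hR]

theorem isGaborFrame_iff_of_gaborSum_comp {φ φ' : E n → ℂ} {Λ Λ' : Set (E n × E n)} {a b : ℝ}
    (U : (E n → ℂ) → E n → ℂ) (hU : ∀ f, MemLp f 2 → MemLp (U f) 2)
    (hUsurj : ∀ g, MemLp g 2 → ∃ f, MemLp f 2 ∧ U f = g)
    (hUnorm : ∀ f, MemLp f 2 → ∫ x, ‖U f x‖ ^ 2 = ∫ x, ‖f x‖ ^ 2)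
    (hsum : ∀ f, MemLp f 2 → gaborSum n hb φ Λ (U f) = gaborSum n hb φ' Λ' f) :
    IsGaborFrame n hb φ Λ a b ↔ IsGaborFrame n hb φ' Λ' a b := by
  constructor
  · intro h f hf
    simpa only [hsum f hf, hUnorm f hf] using h (U f) (hU f hf)
  · intro h g hg
    obtain ⟨f, hf, rfl⟩ := hUsurj g hg
    simpa only [hsum f hf, hUnorm f hf] using h f hf

end Frames

theorem stmt19_general (n : ℕ) (hb : ℝ) (hhb : 0 < hb)
    (X Y R : Matrix (Fin n) (Fin n) ℝ)
    (hX : Xᵀ = X)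
    (hRsym : Rᵀ = R) (hRpd : R.PosDef) (hRR : R * R = Y)
    (Λ : Set (E n × E n)) (a b : ℝ) :
    IsGaborFrame n hb (gaussM n hb X Y) Λ a b ↔
      IsGaborFrame n hb (gauss0 n hb) (SinvXY n X R '' Λ) a b := by
  have hR : 0 < R.det := hRpd.det_pos
  have hRinv : 0 < R⁻¹.det := by
    rw [det_nonsing_inv, Ring.inverse_eq_inv']
    positivity
  exact isGaborFrame_iff_of_gaborSum_comp (metaplecticOp hb X R)
    (fun f hf => hf.metaplecticOp hR)
    (fun g hg => ⟨_, hg.metaplecticOp hRinv, metaplecticOp_metaplecticOp_inv hR g⟩)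
    (fun f _ => integral_norm_sq_metaplecticOp hR f)
    (fun f _ => gaborSum_gaussM_metaplecticOp hhb hX hRsym hR hRR Λ f)

/-- frames with a generalized Gaussian window reduce to frames with
the standard Gaussian window: `G(φ_M^ℏ, Λ)` is an `ℏ`-frame with bounds `a,b` iff
`G(φ₀^ℏ, S⁻¹Λ)` is, where `M = X + iY` and
`S⁻¹ = [[Y^{1/2},0],[−Y^{−1/2}X, Y^{−1/2}]]`. -/
theorem stmt19 (n : ℕ) (hb : ℝ) (hhb : 0 < hb)
    (X Y R : Matrix (Fin n) (Fin n) ℝ)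
    (hX : Xᵀ = X) (hY : Yᵀ = Y) (hYpd : Y.PosDef)
    (hRsym : Rᵀ = R) (hRpd : R.PosDef) (hRR : R * R = Y)
    (Λ : Set (E n × E n)) (hΛ : Λ.Countable) (a b : ℝ) (ha : 0 < a) (hbd : 0 < b) :
    IsGaborFrame n hb (gaussM n hb X Y) Λ a b ↔
      IsGaborFrame n hb (gauss0 n hb) (SinvXY n X R '' Λ) a b :=
  stmt19_general n hb hhb X Y R hX hRsym hRpd hRR Λ a b
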